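/- If the gate A(c1,c2,c3) is a perfect entangler, then A(π−c1, c2, c3) and A(π/2−c1, π/2−c2, π/2−c3) are also perfect entanglers. -/

import Mathlib

open Matrix Complex

set_option maxHeartbeats 1600000

noncomputable section

/-- Pauli matrix σx. -/
def sigmaX : Matrix (Fin 2) (Fin 2) ℂ := !![0, 1; 1, 0]
/-- Pauli matrix σy. -/
def sigmaY : Matrix (Fin 2) (Fin 2) ℂ := !![0, -I; I, 0]
/-- Pauli matrix σz. -/
def sigmaZ : Matrix (Fin 2) (Fin 2) ℂ := !![1, 0; 0, -1]

/-- Kronecker product of two 2×2 complex matrices, as a 4×4 matrix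
(row-major ordering: entry ((2i+k),(2j+l)) is `A i j * B k l`). -/
def kron (A B : Matrix (Fin 2) (Fin 2) ℂ) : Matrix (Fin 4) (Fin 4) ℂ :=
  Matrix.of fun i j =>
    A ⟨i.val / 2, by have := i.isLt; omega⟩ ⟨j.val / 2, by have := j.isLt; omega⟩ *
    B ⟨i.val % 2, by have := i.isLt; omega⟩ ⟨j.val % 2, by have := j.isLt; omega⟩

/-- The matrix P = -(1/2) σy⊗σy. -/
def Pmat : Matrix (Fin 4) (Fin 4) ℂ := (-(1/2) : ℂ) • kron sigmaY sigmaY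

/-- Ent ψ = ψᵀ P ψ. -/
def Ent (ψ : Fin 4 → ℂ) : ℂ := ∑ i, ∑ j, ψ i * Pmat i j * ψ j

/-- A 4×4 unitary U is a perfect entangler if some unit vector ψ with Ent ψ = 0
satisfies |Ent (Uψ)| = 1/2. -/
def PerfectEntangler (U : Matrix (Fin 4) (Fin 4) ℂ) : Prop :=
  ∃ ψ : Fin 4 → ℂ, (∑ i, ‖ψ i‖ ^ 2) = 1 ∧ Ent ψ = 0 ∧
    ‖Ent (U.mulVec ψ)‖ = 1 / 2

/-- The gate A(c1,c2,c3) = exp((i/2)(c1 σx⊗σx + c2 σy⊗σy + c3 σz⊗σz)). -/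
def Agate (c1 c2 c3 : ℝ) : Matrix (Fin 4) (Fin 4) ℂ :=
  NormedSpace.exp ((I / 2) •
    ((c1 : ℂ) • kron sigmaX sigmaX + (c2 : ℂ) • kron sigmaY sigmaY +
      (c3 : ℂ) • kron sigmaZ sigmaZ))

lemma kronXX : kron sigmaX sigmaX = !![0,0,0,1; 0,0,1,0; 0,1,0,0; 1,0,0,0] := by
  ext i j
  fin_cases i <;> fin_cases j <;>
    simp [kron, sigmaX, show ((3:Fin 4):ℕ)=3 from rfl, show ((2:Fin 4):ℕ)=2 from rfl,
      Fin.mk_one, show (⟨0,by norm_num⟩ : Fin 2) = 0 from rfl, Matrix.vecHead, Matrix.vecTail]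

lemma kronYY : kron sigmaY sigmaY = !![0,0,0,-1; 0,0,1,0; 0,1,0,0; -1,0,0,0] := by
  ext i j
  fin_cases i <;> fin_cases j <;>
    simp [kron, sigmaY, show ((3:Fin 4):ℕ)=3 from rfl, show ((2:Fin 4):ℕ)=2 from rfl,
      Fin.mk_one, show (⟨0,by norm_num⟩ : Fin 2) = 0 from rfl, Matrix.vecHead, Matrix.vecTail,
      I_mul_I]

lemma kronZZ : kron sigmaZ sigmaZ = !![1,0,0,0; 0,-1,0,0; 0,0,-1,0; 0,0,0,1] := by
  ext i j
  fin_cases i <;> fin_cases j <;>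
    simp [kron, sigmaZ, show ((3:Fin 4):ℕ)=3 from rfl, show ((2:Fin 4):ℕ)=2 from rfl,
      Fin.mk_one, show (⟨0,by norm_num⟩ : Fin 2) = 0 from rfl, Matrix.vecHead, Matrix.vecTail]

def U4 : Matrix (Fin 4) (Fin 4) ℂ := !![1,1,0,0; 0,0,1,1; 0,0,1,-1; 1,-1,0,0]
def V4 : Matrix (Fin 4) (Fin 4) ℂ :=
  !![1/2,0,0,1/2; 1/2,0,0,-(1/2); 0,1/2,1/2,0; 0,1/2,-(1/2),0]

def Bmat (d : Fin 4 → ℂ) : Matrix (Fin 4) (Fin 4) ℂ :=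
  !![(d 0 + d 1)/2, 0, 0, (d 0 - d 1)/2;
     0, (d 2 + d 3)/2, (d 2 - d 3)/2, 0;
     0, (d 2 - d 3)/2, (d 2 + d 3)/2, 0;
     (d 0 - d 1)/2, 0, 0, (d 0 + d 1)/2]

lemma U4_mul_V4 : U4 * V4 = 1 := by
  ext i j
  fin_cases i <;> fin_cases j <;>
    simp [U4, V4, Matrix.mul_apply, Fin.sum_univ_four, Matrix.one_apply,
      Matrix.vecTail, Matrix.vecHead] <;> norm_num

lemma V4_mul_U4 : V4 * U4 = 1 := by
  ext i j
  fin_cases i <;> fin_cases j <;>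
    simp [U4, V4, Matrix.mul_apply, Fin.sum_univ_four, Matrix.one_apply,
      Matrix.vecTail, Matrix.vecHead] <;> norm_num

lemma diagonal_eq (d : Fin 4 → ℂ) :
    diagonal d = !![d 0,0,0,0; 0,d 1,0,0; 0,0,d 2,0; 0,0,0,d 3] := by
  ext i j
  fin_cases i <;> fin_cases j <;>
    simp [Matrix.diagonal_apply, Fin.ext_iff, Matrix.vecHead, Matrix.vecTail,
      show ((3:Fin 4):ℕ)=3 from rfl, show ((2:Fin 4):ℕ)=2 from rfl]

lemma conj_eq (d : Fin 4 → ℂ) : U4 * diagonal d * V4 = Bmat d := by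
  rw [diagonal_eq]
  ext i j
  fin_cases i <;> fin_cases j <;>
    simp [U4, V4, Bmat, Matrix.mul_apply, Fin.sum_univ_four,
      Matrix.vecTail, Matrix.vecHead] <;> ring

def lam (c1 c2 c3 : ℝ) : Fin 4 → ℝ :=
  ![(c1-c2+c3)/2, (-c1+c2+c3)/2, (c1+c2-c3)/2, -(c1+c2+c3)/2]

lemma ham_eq (c1 c2 c3 : ℝ) :
    (I / 2) • ((c1 : ℂ) • kron sigmaX sigmaX + (c2 : ℂ) • kron sigmaY sigmaY +
      (c3 : ℂ) • kron sigmaZ sigmaZ) =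
    U4 * diagonal (fun k => I * ((lam c1 c2 c3 k : ℝ) : ℂ)) * V4 := by
  rw [conj_eq, kronXX, kronYY, kronZZ]
  ext i j
  fin_cases i <;> fin_cases j <;>
    simp [Bmat, lam, Matrix.vecHead, Matrix.vecTail, Matrix.smul_apply, Matrix.add_apply] <;>
      push_cast <;> ring

def U4u : (Matrix (Fin 4) (Fin 4) ℂ)ˣ := ⟨U4, V4, U4_mul_V4, V4_mul_U4⟩

lemma agate_eq (c1 c2 c3 : ℝ) :
    Agate c1 c2 c3 = Bmat (fun k => Complex.exp (I * ((lam c1 c2 c3 k : ℝ) : ℂ))) := by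
  rw [Agate, ham_eq]
  have h1 : (U4 : Matrix (Fin 4) (Fin 4) ℂ) = (U4u : Matrix (Fin 4) (Fin 4) ℂ) := rfl
  have h2 : (V4 : Matrix (Fin 4) (Fin 4) ℂ) = ((U4u⁻¹ : (Matrix (Fin 4) (Fin 4) ℂ)ˣ) :
      Matrix (Fin 4) (Fin 4) ℂ) := rfl
  rw [h1, h2, Matrix.exp_units_conj, Matrix.exp_diagonal, ← h1, ← h2, conj_eq]
  have : (NormedSpace.exp fun k => I * ((lam c1 c2 c3 k : ℝ) : ℂ)) =
      fun k => Complex.exp (I * ((lam c1 c2 c3 k : ℝ) : ℂ)) := by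
    funext k
    rw [Pi.coe_exp, Complex.exp_eq_exp_ℂ]
  rw [this]

lemma Ent_formula (ψ : Fin 4 → ℂ) : Ent ψ = ψ 0 * ψ 3 - ψ 1 * ψ 2 := by
  rw [Ent]
  simp only [Pmat, kronYY, Fin.sum_univ_four, Matrix.smul_apply]
  simp [Matrix.vecHead, Matrix.vecTail, smul_eq_mul]
  ring

lemma mulVec_Bmat (d ψ : Fin 4 → ℂ) :
    (Bmat d).mulVec ψ = ![((d 0 + d 1)*ψ 0 + (d 0 - d 1)*ψ 3)/2,
      ((d 2 + d 3)*ψ 1 + (d 2 - d 3)*ψ 2)/2,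
      ((d 2 - d 3)*ψ 1 + (d 2 + d 3)*ψ 2)/2,
      ((d 0 - d 1)*ψ 0 + (d 0 + d 1)*ψ 3)/2] := by
  funext i
  fin_cases i <;>
    simp [Bmat, Matrix.mulVec, dotProduct, Fin.sum_univ_four, Matrix.vecHead, Matrix.vecTail] <;>
    ring

lemma key1 (e ψ : Fin 4 → ℂ) :
    Ent ((Bmat ![I * star (e 2), -(I * star (e 3)), I * star (e 0), -(I * star (e 1))]).mulVec
      ![star (ψ 1), star (ψ 0), star (ψ 3), star (ψ 2)]) =
    star (Ent ((Bmat e).mulVec ψ)) := by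
  rw [mulVec_Bmat, mulVec_Bmat, Ent_formula, Ent_formula]
  simp only [Matrix.cons_val_zero, Matrix.cons_val_one, Matrix.head_cons,
    Matrix.cons_val_two, Matrix.cons_val_three, Matrix.tail_cons, star_div₀, star_add, star_sub,
    star_mul', star_star, star_ofNat]
  ring_nf
  simp only [I_sq]
  ring

lemma key2 (ω : ℂ) (e ψ : Fin 4 → ℂ) :
    Ent ((Bmat ![ω * star (e 0), ω * star (e 1), ω * star (e 2), -(ω * star (e 3))]).mulVec
      ![star (ψ 0), star (ψ 1), star (ψ 2), star (ψ 3)]) =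
    ω^2 * star (Ent ((Bmat e).mulVec ψ)) := by
  rw [mulVec_Bmat, mulVec_Bmat, Ent_formula, Ent_formula]
  simp only [Matrix.cons_val_zero, Matrix.cons_val_one, Matrix.head_cons,
    Matrix.cons_val_two, Matrix.cons_val_three, Matrix.tail_cons, star_div₀, star_add, star_sub,
    star_mul', star_star, star_ofNat]
  ring

-- scalar exp lemmas
lemma Estar (x : ℝ) : star (Complex.exp (I * (x : ℂ))) = Complex.exp (I * ((-x : ℝ) : ℂ)) := by
  rw [Complex.star_def, ← Complex.exp_conj]
  push_cast
  congr 1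
  simp [Complex.ext_iff]

lemma Epi2 : Complex.exp (I * ((Real.pi/2 : ℝ) : ℂ)) = I := by
  rw [mul_comm, Complex.exp_mul_I]
  push_cast
  simp

lemma Epi2' : Complex.exp (I * ((-(Real.pi/2) : ℝ) : ℂ)) = -I := by
  rw [mul_comm, Complex.exp_mul_I]
  push_cast
  simp

lemma Epi : Complex.exp (I * ((-Real.pi : ℝ) : ℂ)) = -1 := by
  rw [mul_comm, Complex.exp_mul_I]
  push_cast
  simp

lemma Esplit (a b : ℝ) : Complex.exp (I * ((a + b : ℝ) : ℂ)) =
    Complex.exp (I * (a : ℂ)) * Complex.exp (I * (b : ℂ)) := by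
  rw [← Complex.exp_add]
  congr 1
  push_cast
  ring

lemma Emul (a b : ℝ) (h : a = Real.pi/2 + b) :
    Complex.exp (I * (a : ℂ)) = I * Complex.exp (I * (b : ℂ)) := by
  rw [h, Esplit, Epi2]

lemma Emul' (a b : ℝ) (h : a = -(Real.pi/2) + b) :
    Complex.exp (I * (a : ℂ)) = -I * Complex.exp (I * (b : ℂ)) := by
  rw [h, Esplit, Epi2']

lemma Emul4 (a b : ℝ) (h : a = Real.pi/4 + b) :
    Complex.exp (I * (a : ℂ)) =
      Complex.exp (I * ((Real.pi/4 : ℝ) : ℂ)) * Complex.exp (I * (b : ℂ)) := by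
  rw [h, Esplit]

lemma Emul4' (a b : ℝ) (h : a = -(3*Real.pi/4) + b) :
    Complex.exp (I * (a : ℂ)) =
      -(Complex.exp (I * ((Real.pi/4 : ℝ) : ℂ)) * Complex.exp (I * (b : ℂ))) := by
  have h2 : a = Real.pi/4 + (-Real.pi + b) := by rw [h]; ring
  rw [h2, Esplit, Esplit, Epi]
  ring

lemma Eabs (x : ℝ) : ‖Complex.exp (I * (x : ℂ))‖ = 1 := by
  rw [mul_comm]
  exact Complex.norm_exp_ofReal_mul_I x

/-- If A(c1,c2,c3) is a perfect entangler, then so are A(π−c1,c2,c3) and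
A(π/2−c1, π/2−c2, π/2−c3). -/
theorem perfect_entangler_symmetries (c1 c2 c3 : ℝ)
    (h : PerfectEntangler (Agate c1 c2 c3)) :
    PerfectEntangler (Agate (Real.pi - c1) c2 c3) ∧
    PerfectEntangler (Agate (Real.pi / 2 - c1) (Real.pi / 2 - c2) (Real.pi / 2 - c3)) := by
  obtain ⟨ψ, hn, h0, ha⟩ := h
  rw [agate_eq] at ha
  rw [Ent_formula] at h0
  rw [Fin.sum_univ_four] at hn
  constructor
  · refine ⟨![star (ψ 1), star (ψ 0), star (ψ 3), star (ψ 2)], ?_, ?_, ?_⟩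
    · rw [Fin.sum_univ_four]
      simp only [Matrix.cons_val_zero, Matrix.cons_val_one, Matrix.head_cons,
        Matrix.cons_val_two, Matrix.tail_cons, Matrix.cons_val_three, Complex.star_def,
        Complex.norm_conj]
      linarith
    · rw [Ent_formula]
      simp only [Matrix.cons_val_zero, Matrix.cons_val_one, Matrix.head_cons,
        Matrix.cons_val_two, Matrix.tail_cons, Matrix.cons_val_three]
      have h0' := congrArg star h0
      simp only [star_sub, star_mul', star_zero] at h0'
      linear_combination -h0'
    · have hd1 : (fun k => Complex.exp (I * ((lam (Real.pi - c1) c2 c3 k : ℝ) : ℂ))) =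
          ![I * star (Complex.exp (I * ((lam c1 c2 c3 2 : ℝ) : ℂ))),
            -(I * star (Complex.exp (I * ((lam c1 c2 c3 3 : ℝ) : ℂ)))),
            I * star (Complex.exp (I * ((lam c1 c2 c3 0 : ℝ) : ℂ))),
            -(I * star (Complex.exp (I * ((lam c1 c2 c3 1 : ℝ) : ℂ))))] := by
        funext k
        fin_cases k
        · show Complex.exp (I * ((((Real.pi - c1) - c2 + c3)/2 : ℝ) : ℂ)) =
            I * star (Complex.exp (I * (((c1 + c2 - c3)/2 : ℝ) : ℂ)))
          rw [Estar]
          exact Emul _ _ (by ring)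
        · show Complex.exp (I * (((-(Real.pi - c1) + c2 + c3)/2 : ℝ) : ℂ)) =
            -(I * star (Complex.exp (I * ((-(c1 + c2 + c3)/2 : ℝ) : ℂ))))
          rw [Estar, Emul' _ _ (by ring : (-(Real.pi - c1) + c2 + c3)/2 =
            -(Real.pi/2) + (-(-(c1 + c2 + c3)/2)))]
          ring
        · show Complex.exp (I * ((((Real.pi - c1) + c2 - c3)/2 : ℝ) : ℂ)) =
            I * star (Complex.exp (I * (((c1 - c2 + c3)/2 : ℝ) : ℂ)))
          rw [Estar]
          exact Emul _ _ (by ring)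
        · show Complex.exp (I * ((-((Real.pi - c1) + c2 + c3)/2 : ℝ) : ℂ)) =
            -(I * star (Complex.exp (I * (((-c1 + c2 + c3)/2 : ℝ) : ℂ))))
          rw [Estar, Emul' _ _ (by ring : -((Real.pi - c1) + c2 + c3)/2 =
            -(Real.pi/2) + (-((-c1 + c2 + c3)/2)))]
          ring
      rw [agate_eq, hd1,
        key1 (fun k => Complex.exp (I * ((lam c1 c2 c3 k : ℝ) : ℂ))) ψ,
        Complex.star_def, Complex.norm_conj]
      exact ha
  · refine ⟨![star (ψ 0), star (ψ 1), star (ψ 2), star (ψ 3)], ?_, ?_, ?_⟩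
    · rw [Fin.sum_univ_four]
      simp only [Matrix.cons_val_zero, Matrix.cons_val_one, Matrix.head_cons,
        Matrix.cons_val_two, Matrix.tail_cons, Matrix.cons_val_three, Complex.star_def,
        Complex.norm_conj]
      linarith
    · rw [Ent_formula]
      simp only [Matrix.cons_val_zero, Matrix.cons_val_one, Matrix.head_cons,
        Matrix.cons_val_two, Matrix.tail_cons, Matrix.cons_val_three]
      have h0' := congrArg star h0
      simp only [star_sub, star_mul', star_zero] at h0'
      linear_combination h0'
    · have hd2 : (fun k => Complex.exp (I * ((lam (Real.pi/2 - c1) (Real.pi/2 - c2)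
          (Real.pi/2 - c3) k : ℝ) : ℂ))) =
          ![Complex.exp (I * ((Real.pi/4 : ℝ) : ℂ)) *
              star (Complex.exp (I * ((lam c1 c2 c3 0 : ℝ) : ℂ))),
            Complex.exp (I * ((Real.pi/4 : ℝ) : ℂ)) *
              star (Complex.exp (I * ((lam c1 c2 c3 1 : ℝ) : ℂ))),
            Complex.exp (I * ((Real.pi/4 : ℝ) : ℂ)) *
              star (Complex.exp (I * ((lam c1 c2 c3 2 : ℝ) : ℂ))),
            -(Complex.exp (I * ((Real.pi/4 : ℝ) : ℂ)) *
              star (Complex.exp (I * ((lam c1 c2 c3 3 : ℝ) : ℂ))))] := by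
        funext k
        fin_cases k
        · show Complex.exp (I * ((((Real.pi/2 - c1) - (Real.pi/2 - c2) + (Real.pi/2 - c3))/2 : ℝ) : ℂ)) =
            Complex.exp (I * ((Real.pi/4 : ℝ) : ℂ)) *
              star (Complex.exp (I * (((c1 - c2 + c3)/2 : ℝ) : ℂ)))
          rw [Estar]
          exact Emul4 _ _ (by ring)
        · show Complex.exp (I * (((-(Real.pi/2 - c1) + (Real.pi/2 - c2) + (Real.pi/2 - c3))/2 : ℝ) : ℂ)) =
            Complex.exp (I * ((Real.pi/4 : ℝ) : ℂ)) *
              star (Complex.exp (I * (((-c1 + c2 + c3)/2 : ℝ) : ℂ)))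
          rw [Estar]
          exact Emul4 _ _ (by ring)
        · show Complex.exp (I * ((((Real.pi/2 - c1) + (Real.pi/2 - c2) - (Real.pi/2 - c3))/2 : ℝ) : ℂ)) =
            Complex.exp (I * ((Real.pi/4 : ℝ) : ℂ)) *
              star (Complex.exp (I * (((c1 + c2 - c3)/2 : ℝ) : ℂ)))
          rw [Estar]
          exact Emul4 _ _ (by ring)
        · show Complex.exp (I * ((-((Real.pi/2 - c1) + (Real.pi/2 - c2) + (Real.pi/2 - c3))/2 : ℝ) : ℂ)) =
            -(Complex.exp (I * ((Real.pi/4 : ℝ) : ℂ)) *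
              star (Complex.exp (I * ((-(c1 + c2 + c3)/2 : ℝ) : ℂ))))
          rw [Estar]
          exact Emul4' _ _ (by ring)
      rw [agate_eq, hd2,
        key2 (Complex.exp (I * ((Real.pi/4 : ℝ) : ℂ)))
          (fun k => Complex.exp (I * ((lam c1 c2 c3 k : ℝ) : ℂ))) ψ,
        norm_mul, norm_pow, Eabs, one_pow, one_mul, Complex.star_def, Complex.norm_conj]
      exact ha
end
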